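/- The set of integer points (x,y,z) ∈ ℤ³ satisfying 2x² + 2y² + 2z² + xy + 2xz + 2yz − 5x − 5y − 6z + 5 ≤ 0 is exactly {(1,1,0), (1,0,1), (0,1,1), (1,1,1)}, and the left-hand side vanishes at each of these four points. (These four points are the vertices of the tetrahedron T⁶_{(0,0,0)}.) -/

import Mathlib

/-!
Completing the square in the other two variables bounds `Q` below by `((3x - 2)² - 5) / 6` and by
`2z(3z - 5) / 5`. So a lattice point of `Q₆` has `x`, and by the symmetry `x ↔ y` also `y`, and `z`
in `{0, 1}`, and the eight candidates are checked directly.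
-/

def q6 {R : Type*} [CommRing R] (x y z : R) : R :=
  2 * x ^ 2 + 2 * y ^ 2 + 2 * z ^ 2 + x * y + 2 * x * z + 2 * y * z - 5 * x - 5 * y - 6 * z + 5

def tetrahedronVertices : Set (ℤ × ℤ × ℤ) := {(1,1,0), (1,0,1), (0,1,1), (1,1,1)}

section CommRing

variable {R : Type*} [CommRing R]

theorem q6_comm (x y z : R) : q6 x y z = q6 y x z := by
  unfold q6; ring

theorem twentyFour_mul_q6 (x y z : R) :
    24 * q6 x y z = 4 * ((3 * x - 2) ^ 2 - 5) + 3 * (x + 4 * y + 2 * z - 5) ^ 2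
      + (3 * x + 6 * z - 7) ^ 2 := by
  unfold q6; ring

theorem twenty_mul_q6 (x y z : R) :
    20 * q6 x y z = 8 * (z * (3 * z - 5)) + (5 * x + 5 * y + 4 * z - 10) ^ 2
      + 15 * (x - y) ^ 2 := by
  unfold q6; ring

end CommRing

section Ordered

variable {R : Type*} [CommRing R] [LinearOrder R] [IsStrictOrderedRing R]

theorem sq_three_mul_sub_two_le_of_q6_nonpos {x y z : R} (h : q6 x y z ≤ 0) :
    (3 * x - 2) ^ 2 ≤ 5 := by
  nlinarith [twentyFour_mul_q6 x y z, sq_nonneg (x + 4 * y + 2 * z - 5),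
    sq_nonneg (3 * x + 6 * z - 7)]

theorem mul_three_mul_sub_five_nonpos_of_q6_nonpos {x y z : R} (h : q6 x y z ≤ 0) :
    z * (3 * z - 5) ≤ 0 := by
  nlinarith [twenty_mul_q6 x y z, sq_nonneg (5 * x + 5 * y + 4 * z - 10), sq_nonneg (x - y)]

end Ordered

theorem Int.eq_zero_or_eq_one_of_sq_three_mul_sub_two_le {x : ℤ} (h : (3 * x - 2) ^ 2 ≤ 5) :
    x = 0 ∨ x = 1 := by
  have : 0 ≤ x := by nlinarith
  have : x ≤ 1 := by nlinarith
  omega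

theorem Int.eq_zero_or_eq_one_of_mul_three_mul_sub_five_nonpos {z : ℤ} (h : z * (3 * z - 5) ≤ 0) :
    z = 0 ∨ z = 1 := by
  have : 0 ≤ z := by nlinarith
  have : z ≤ 1 := by nlinarith
  omega

theorem q6_eq_zero_of_mem_tetrahedronVertices {v : ℤ × ℤ × ℤ} (hv : v ∈ tetrahedronVertices) :
    q6 v.1 v.2.1 v.2.2 = 0 := by
  rcases hv with rfl | rfl | rfl | rfl <;> simp [q6]

theorem q6_nonpos_iff_mem_tetrahedronVertices (x y z : ℤ) :
    q6 x y z ≤ 0 ↔ (x, y, z) ∈ tetrahedronVertices := by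
  constructor
  · intro h
    have hx := Int.eq_zero_or_eq_one_of_sq_three_mul_sub_two_le
      (sq_three_mul_sub_two_le_of_q6_nonpos h)
    have hy := Int.eq_zero_or_eq_one_of_sq_three_mul_sub_two_le
      (sq_three_mul_sub_two_le_of_q6_nonpos (q6_comm x y z ▸ h))
    have hz := Int.eq_zero_or_eq_one_of_mul_three_mul_sub_five_nonpos
      (mul_three_mul_sub_five_nonpos_of_q6_nonpos h)
    rcases hx with rfl | rfl <;> rcases hy with rfl | rfl <;> rcases hz with rfl | rfl <;>
      simp_all [q6, tetrahedronVertices]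
  · exact fun hv => (q6_eq_zero_of_mem_tetrahedronVertices hv).le

theorem lattice_points_of_ellipsoid_Q6 :
    {v : ℤ × ℤ × ℤ | 2 * v.1 ^ 2 + 2 * v.2.1 ^ 2 + 2 * v.2.2 ^ 2 + v.1 * v.2.1 + 2 * v.1 * v.2.2 + 2 * v.2.1 * v.2.2 - 5 * v.1 - 5 * v.2.1 - 6 * v.2.2 + 5 ≤ 0} =
      ({(1,1,0), (1,0,1), (0,1,1), (1,1,1)} : Set (ℤ × ℤ × ℤ)) ∧
    ∀ v ∈ ({(1,1,0), (1,0,1), (0,1,1), (1,1,1)} : Set (ℤ × ℤ × ℤ)),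
      2 * v.1 ^ 2 + 2 * v.2.1 ^ 2 + 2 * v.2.2 ^ 2 + v.1 * v.2.1 + 2 * v.1 * v.2.2 + 2 * v.2.1 * v.2.2 - 5 * v.1 - 5 * v.2.1 - 6 * v.2.2 + 5 = 0 :=
  ⟨Set.ext fun ⟨x, y, z⟩ => q6_nonpos_iff_mem_tetrahedronVertices x y z,
    fun _ hv => q6_eq_zero_of_mem_tetrahedronVertices hv⟩
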